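/- arXiv:1102.4783 — 2 statements merged into one kernel-verified Lean document; each statement's English description precedes it below -/
import Mathlib

section
/- Let $F$ be a unimodular fan in $V = \Lambda \otimes \mathbb{R}$ with a unique maximal cone $\sigma$ of dimension $d$. Then for each $k$, the sequence $0 \to \Psi_\sigma \cdot \mathrm{P}^{k-d}(V_\sigma) \to \mathrm{PP}^k(F) \to \mathrm{PP}^k(F \setminus \{\sigma\}) \to 0$ is exact, where the second map is restriction to the boundary subfan: a piecewise polynomial on $F$ vanishing on all proper faces of $\sigma$ equals $a \cdot \Psi_\sigma$ for a unique homogeneous integer polynomial $a$ of degree $k - d$. -/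
/-- The real vector associated to the primitive integral generator of the `i`-th ray. -/
def rayR (n d : ℕ) (v : Fin d → Fin n → ℤ) (i : Fin d) : Fin n → ℝ :=
  fun t => (v i t : ℝ)

/-- The face of the unique maximal cone spanned by the rays indexed by `T`. -/
def coneOf (n d : ℕ) (v : Fin d → Fin n → ℤ) (T : Finset (Fin d)) : Set (Fin n → ℝ) :=
  {x | ∃ a : Fin d → ℝ, (∀ i, 0 ≤ a i) ∧ x = ∑ i ∈ T, a i • rayR n d v i}

/-- A function is a piecewise polynomial of degree `k` on the fan of faces of the
unique maximal cone: on each face it is given by a homogeneous integer polynomial. -/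
def IsPP (n d k : ℕ) (v : Fin d → Fin n → ℤ) (Dom : Set (Finset (Fin d)))
    (f : (Fin n → ℝ) → ℝ) : Prop :=
  ∀ T ∈ Dom, ∃ p : MvPolynomial (Fin n) ℤ, p.IsHomogeneous k ∧
    ∀ x ∈ coneOf n d v T, f x = MvPolynomial.aeval x p

/-!
Write the points of the maximal cone as `∑ cᵢ • vᵢ` with `c ≥ 0`. Unimodularity provides integer
linear forms `ℓᵢ` with `ℓᵢ(vⱼ) = δᵢⱼ`, which turn integer polynomials in the coordinates `c` back
into integer polynomials on `V`; so everything happens on the orthant `c ≥ 0`, whose faces are the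
coordinate faces. A piecewise polynomial on the boundary extends by inclusion–exclusion over the
proper faces. A polynomial vanishing on every facet `cᵢ = 0` has only monomials divisible by every
`Xᵢ`, hence is `(∏ Xᵢ) * r`, and `∏ cᵢ = Ψ_σ` on the cone. Uniqueness holds because `Ψ_σ` does not
vanish on the interior of the cone, on which a polynomial is determined.
-/

open MvPolynomial Finset

section Faces

variable {σ : Type*} [DecidableEq σ]

theorem Finset.sum_neg_one_pow_card_mul_inter [Fintype σ] {R : Type*} [CommRing R]
    (H : Finset σ → R) {S : Finset σ} (hS : S ≠ univ) : ∑ T, (-1) ^ T.card * H (T ∩ S) = 0 := by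
  obtain ⟨j, -, hj⟩ := exists_of_ssubset (ssubset_univ_iff.2 hS)
  rw [← powerset_univ, ← insert_erase (mem_univ j), sum_powerset_insert (notMem_erase j _),
    ← sum_add_distrib]
  refine sum_eq_zero fun T hT => ?_
  have hjT : j ∉ T := fun h => notMem_erase j _ (mem_powerset.1 hT h)
  rw [insert_inter_of_notMem hj, card_insert_of_notMem hjT, pow_succ]
  ring

theorem Finset.piecewise_piecewise_zero {M : Type*} [Zero M] (T S : Finset σ) (c : σ → M) :
    T.piecewise (S.piecewise c 0) 0 = (T ∩ S).piecewise c 0 := by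
  ext i
  by_cases hT : i ∈ T <;> by_cases hS : i ∈ S <;> simp [hT, hS]

theorem Finset.piecewise_zero_nonneg {M : Type*} [Preorder M] [Zero M] (T : Finset σ)
    {c : σ → M} (hc : 0 ≤ c) : 0 ≤ T.piecewise c 0 := fun i => by
  by_cases hi : i ∈ T
  · simpa [hi] using hc i
  · simp [hi]

end Faces

namespace MvPolynomial

section Orthant

variable {σ : Type*}

theorem eq_zero_of_aeval_pos {q : MvPolynomial σ ℤ}
    (h : ∀ c : σ → ℝ, (∀ i, 0 < c i) → aeval c q = 0) : q = 0 := by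
  refine map_injective (Int.castRingHom ℝ) Int.cast_injective ?_
  rw [map_zero]
  refine funext_set (fun _ => Set.Ioi 0) (fun _ => Set.Ioi_infinite 0) fun c hc => ?_
  rw [eval_map, map_zero, ← h c fun i => hc i trivial]
  rfl

theorem aeval_update_of_forall_mem_support {R S : Type*} [CommSemiring R] [CommSemiring S]
    [Algebra R S] [DecidableEq σ] {q : MvPolynomial σ R} {i : σ}
    (hq : ∀ m ∈ q.support, m i = 0) (c : σ → S) (t : S) :
    aeval (Function.update c i t) q = aeval c q := by
  conv_lhs => rw [← q.support_sum_monomial_coeff]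
  conv_rhs => rw [← q.support_sum_monomial_coeff]
  simp only [map_sum, aeval_monomial]
  refine Finset.sum_congr rfl fun m hm => congrArg _ (Finsupp.prod_congr fun j hj => ?_)
  rw [Function.update_of_ne]
  rintro rfl
  exact Finsupp.mem_support_iff.1 hj (hq m hm)

theorem IsHomogeneous.divMonomial {R : Type*} [CommSemiring R] {q : MvPolynomial σ R} {k : ℕ}
    (hq : q.IsHomogeneous k) (s : σ →₀ ℕ) : (q.divMonomial s).IsHomogeneous (k - s.degree) := by
  intro m hm
  rw [coeff_divMonomial] at hm
  have hsm := hq hm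
  simp only [Finsupp.degree_eq_weight_one, ← Pi.one_def, map_add] at hsm ⊢
  omega

theorem modMonomial_single_eq_zero_of_aeval_eq_zero [DecidableEq σ] {q : MvPolynomial σ ℤ}
    {i : σ} (hq : ∀ c : σ → ℝ, 0 ≤ c → c i = 0 → aeval c q = 0) :
    q.modMonomial (Finsupp.single i 1) = 0 := by
  set r := q.modMonomial (Finsupp.single i 1)
  have hr : ∀ m ∈ r.support, m i = 0 := fun m hm => by
    by_contra hmi
    exact mem_support_iff.1 hm
      (coeff_modMonomial_of_le q (Finsupp.single_le_iff.2 (Nat.one_le_iff_ne_zero.2 hmi)))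
  refine eq_zero_of_aeval_pos fun c hc => ?_
  have hc' : 0 ≤ Function.update c i 0 := by
    intro j
    rcases eq_or_ne j i with rfl | hj
    · simp
    · simpa [Function.update_of_ne hj] using (hc j).le
  calc aeval c r = aeval (Function.update c i 0) r :=
        (aeval_update_of_forall_mem_support hr c 0).symm
    _ = aeval (Function.update c i 0) q := by
      conv_rhs => rw [← divMonomial_add_modMonomial_single q i]
      simp [r]
    _ = 0 := hq _ hc' (by simp)

theorem exists_eq_prod_X_mul_of_aeval_eq_zero [Fintype σ] [DecidableEq σ] {q : MvPolynomial σ ℤ}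
    {k : ℕ} (hq : q.IsHomogeneous k)
    (hzero : ∀ c : σ → ℝ, 0 ≤ c → (∃ i, c i = 0) → aeval c q = 0) :
    ∃ r : MvPolynomial σ ℤ, r.IsHomogeneous (k - Fintype.card σ) ∧ q = (∏ i, X i) * r := by
  set s : σ →₀ ℕ := ∑ i, Finsupp.single i 1
  have hs : ∀ i, s i = 1 := fun i => by simp [s, Finsupp.finsetSum_apply, Finsupp.single_apply]
  have hle : ∀ m ∈ q.support, s ≤ m := fun m hm => Finsupp.le_def.2 fun i => by
    rw [hs, Nat.one_le_iff_ne_zero]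
    intro hmi
    have hmod := modMonomial_single_eq_zero_of_aeval_eq_zero fun c hc hci => hzero c hc ⟨i, hci⟩
    rw [mem_support_iff, ← coeff_modMonomial_of_not_le q (s := Finsupp.single i 1)
      (by simp [Finsupp.single_le_iff, hmi]), hmod] at hm
    exact hm (coeff_zero m)
  have hmod : q.modMonomial s = 0 := by
    ext m
    by_cases hm : s ≤ m
    · rw [coeff_modMonomial_of_le q hm, coeff_zero]
    · rw [coeff_modMonomial_of_not_le q hm, coeff_zero, ← notMem_support_iff]
      exact fun hmq => hm (hle m hmq)
  refine ⟨q.divMonomial s, ?_, ?_⟩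
  · simpa [s, map_sum] using hq.divMonomial s
  · conv_lhs => rw [← divMonomial_add_modMonomial q s, hmod, add_zero]
    simp [s, monomial_sum_one, X]

variable [DecidableEq σ]

theorem aeval_aeval_piecewise_X {R S : Type*} [CommSemiring R] [CommSemiring S]
    [Algebra R S] (T : Finset σ) (q : MvPolynomial σ R) (c : σ → S) :
    aeval c (aeval (T.piecewise (X : σ → MvPolynomial σ R) 0) q) = aeval (T.piecewise c 0) q := by
  rw [comp_aeval_apply]
  congr 1
  ext i
  by_cases hi : i ∈ T <;> simp [hi]

theorem IsHomogeneous.aeval_piecewise_X {R : Type*} [CommSemiring R]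
    {q : MvPolynomial σ R} {k : ℕ} (hq : q.IsHomogeneous k) (T : Finset σ) :
    (MvPolynomial.aeval (T.piecewise (X : σ → MvPolynomial σ R) 0) q).IsHomogeneous k := by
  have h := hq.aeval (T.piecewise (X : σ → MvPolynomial σ R) 0) (n := 1) fun i => by
    by_cases hi : i ∈ T <;> simp [hi, isHomogeneous_X, isHomogeneous_zero]
  rwa [one_mul] at h

/-- On a proper face `S`, the terms for `T` and `insert j T` with `j ∉ S` cancel, so the
inclusion–exclusion sum over proper faces is minus the missing term `T = univ`. -/
theorem exists_isHomogeneous_aeval_eq_on_proper_faces [Fintype σ] {k : ℕ} (G : (σ → ℝ) → ℝ)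
    (hG : ∀ T ≠ univ, ∃ q : MvPolynomial σ ℤ, q.IsHomogeneous k ∧
      ∀ c, 0 ≤ c → aeval (T.piecewise c 0) q = G (T.piecewise c 0)) :
    ∃ Q : MvPolynomial σ ℤ, Q.IsHomogeneous k ∧
      ∀ S ≠ univ, ∀ c, 0 ≤ c → aeval (S.piecewise c 0) Q = G (S.piecewise c 0) := by
  choose! q hq hqG using hG
  set d := Fintype.card σ
  refine ⟨∑ T ∈ univ.erase univ, C ((-1) ^ (d + 1 + T.card)) * aeval (T.piecewise X 0) (q T),
    IsHomogeneous.sum _ _ _ fun T hT => ((hq T (ne_of_mem_erase hT)).aeval_piecewise_X T).C_mul _,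
    fun S hS c hc => ?_⟩
  have hterm : ∀ T ∈ univ.erase univ,
      aeval (S.piecewise c 0) (C ((-1) ^ (d + 1 + T.card)) * aeval (T.piecewise X 0) (q T)) =
        (-1) ^ (d + 1) * ((-1) ^ T.card * G ((T ∩ S).piecewise c 0)) := fun T hT => by
    rw [map_mul, aeval_aeval_piecewise_X, hqG T (ne_of_mem_erase hT) _ (S.piecewise_zero_nonneg hc),
      piecewise_piecewise_zero]
    simp [pow_add, mul_assoc]
  have hsq : ((-1 : ℝ) ^ d) ^ 2 = 1 := by rw [← pow_mul, pow_mul']; simp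
  rw [map_sum, sum_congr rfl hterm, ← mul_sum, sum_erase_eq_sub (mem_univ _),
    sum_neg_one_pow_card_mul_inter (fun T => G (T.piecewise c 0)) hS, univ_inter, card_univ]
  linear_combination G (S.piecewise c 0) * hsq

end Orthant

section LinearPoly

variable {ι : Type*} [Fintype ι]

noncomputable def linearPoly (w : ι → ℤ) : MvPolynomial ι ℤ :=
  ∑ i, C (w i) * X i

theorem aeval_linearPoly {S : Type*} [CommRing S] (w : ι → ℤ) (x : ι → S) :
    aeval x (linearPoly w) = ∑ i, (w i : S) * x i := by
  simp [linearPoly]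

theorem isHomogeneous_linearPoly (w : ι → ℤ) : (linearPoly w).IsHomogeneous 1 :=
  IsHomogeneous.sum _ _ _ fun _ _ => isHomogeneous_C_mul_X _ _

theorem IsHomogeneous.aeval_linearPoly {σ : Type*} {q : MvPolynomial σ ℤ} {k : ℕ}
    (hq : q.IsHomogeneous k) (w : σ → ι → ℤ) :
    (MvPolynomial.aeval (fun j => linearPoly (w j)) q).IsHomogeneous k := by
  simpa only [one_mul] using hq.aeval _ fun j => isHomogeneous_linearPoly (w j)

end LinearPoly

end MvPolynomial

section Cone

variable {n d : ℕ} (v : Fin d → Fin n → ℤ)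

noncomputable def rayMap (c : Fin d → ℝ) : Fin n → ℝ :=
  ∑ i, c i • rayR n d v i

theorem sum_smul_rayR_eq_rayMap_piecewise (T : Finset (Fin d)) (a : Fin d → ℝ) :
    ∑ i ∈ T, a i • rayR n d v i = rayMap v (T.piecewise a 0) := by
  simp [rayMap, Finset.piecewise, ite_smul, Finset.sum_ite_mem]

theorem mem_coneOf_iff {T : Finset (Fin d)} {x : Fin n → ℝ} :
    x ∈ coneOf n d v T ↔ ∃ c, 0 ≤ c ∧ x = rayMap v (T.piecewise c 0) := by
  simp [coneOf, sum_smul_rayR_eq_rayMap_piecewise, Pi.le_def]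

theorem mem_coneOf_univ_iff {x : Fin n → ℝ} :
    x ∈ coneOf n d v univ ↔ ∃ c, 0 ≤ c ∧ x = rayMap v c := by
  simp [mem_coneOf_iff]

theorem rayMap_mem_coneOf_erase {c : Fin d → ℝ} (hc : 0 ≤ c) {i : Fin d} (hi : c i = 0) :
    rayMap v c ∈ coneOf n d v (univ.erase i) := by
  refine (mem_coneOf_iff v).2 ⟨c, hc, congrArg _ (funext fun j => ?_)⟩
  rcases eq_or_ne j i with rfl | hj <;> simp [*]

theorem aeval_aeval_linearPoly_rayMap (p : MvPolynomial (Fin n) ℤ) (c : Fin d → ℝ) :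
    aeval c (aeval (fun t => linearPoly (v · t)) p) = aeval (rayMap v c) p := by
  have hcoord : (fun t => aeval c (linearPoly (v · t))) = rayMap v c := funext fun t => by
    simp [aeval_linearPoly, rayMap, rayR, Finset.sum_apply, mul_comm]
  rw [comp_aeval_apply, hcoord]

theorem exists_dual_of_basis (b : Module.Basis (Fin n) ℤ (Fin n → ℤ)) (g : Fin d → Fin n)
    (hg : Function.Injective g) (hbg : ∀ i, b (g i) = v i) :
    ∃ ℓ : Fin d → Fin n → ℤ, ∀ i j, ∑ s, ℓ i s * v j s = if i = j then 1 else 0 := by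
  refine ⟨fun i s => b.coord (g i) (Pi.single s 1), fun i j => ?_⟩
  calc ∑ s, b.coord (g i) (Pi.single s 1) * v j s = b.coord (g i) (v j) := by
        conv_rhs => rw [pi_eq_sum_univ' (v j)]
        simp only [map_sum, map_smul, smul_eq_mul, mul_comm]
    _ = if i = j then 1 else 0 := by
        rw [← hbg j, b.coord_apply, b.repr_self, Finsupp.single_apply]
        simp [hg.eq_iff, eq_comm]

variable {v} {ℓ : Fin d → Fin n → ℤ} {Ψ : Fin d → (Fin n → ℝ) →ₗ[ℝ] ℝ}

theorem aeval_rayMap_aeval_linearPoly_dual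
    (hℓ : ∀ i j, ∑ s, ℓ i s * v j s = if i = j then 1 else 0)
    (Q : MvPolynomial (Fin d) ℤ) (c : Fin d → ℝ) :
    aeval (rayMap v c) (aeval (fun i => linearPoly (ℓ i)) Q) = aeval c Q := by
  suffices hcoord : (fun i => aeval (rayMap v c) (linearPoly (ℓ i))) = c by
    rw [comp_aeval_apply, hcoord]
  funext i
  have hℓR : ∀ j, ∑ s, (ℓ i s : ℝ) * v j s = if i = j then 1 else 0 := fun j => by
    exact_mod_cast hℓ i j
  simp only [aeval_linearPoly, rayMap, rayR, Finset.sum_apply, Pi.smul_apply, smul_eq_mul,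
    Finset.mul_sum]
  rw [Finset.sum_comm]
  simp [mul_left_comm _ (c _), ← Finset.mul_sum, hℓR]

theorem apply_rayMap (hΨ : ∀ i j, Ψ i (rayR n d v j) = if i = j then 1 else 0)
    (c : Fin d → ℝ) (i : Fin d) : Ψ i (rayMap v c) = c i := by
  simp [rayMap, hΨ]

theorem exists_isPP_extension_of_isPP_boundary
    (hℓ : ∀ i j, ∑ s, ℓ i s * v j s = if i = j then 1 else 0) {k : ℕ} {g : (Fin n → ℝ) → ℝ}
    (hg : IsPP n d k v {T | T ≠ univ} g) :
    ∃ f, IsPP n d k v Set.univ f ∧ ∀ T ≠ univ, ∀ x ∈ coneOf n d v T, f x = g x := by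
  obtain ⟨Q, hQ, hQg⟩ := exists_isHomogeneous_aeval_eq_on_proper_faces (g ∘ rayMap v)
    fun T hT => by
      obtain ⟨p, hp, hpg⟩ := hg T hT
      refine ⟨_, hp.aeval_linearPoly (fun t i => v i t), fun c hc => ?_⟩
      rw [aeval_aeval_linearPoly_rayMap, ← hpg _ ((mem_coneOf_iff v).2 ⟨c, hc, rfl⟩)]
      rfl
  refine ⟨fun x => aeval x (aeval (fun i => linearPoly (ℓ i)) Q),
    fun _ _ => ⟨_, hQ.aeval_linearPoly ℓ, fun _ _ => rfl⟩, fun S hS x hx => ?_⟩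
  obtain ⟨c, hc, rfl⟩ := (mem_coneOf_iff v).1 hx
  exact (aeval_rayMap_aeval_linearPoly_dual hℓ Q _).trans (hQg S hS c hc)

theorem exists_eq_mul_prod_of_isPP_of_eq_zero_on_boundary
    (hℓ : ∀ i j, ∑ s, ℓ i s * v j s = if i = j then 1 else 0)
    (hΨ : ∀ i j, Ψ i (rayR n d v j) = if i = j then 1 else 0) {k : ℕ}
    {f : (Fin n → ℝ) → ℝ} (hf : IsPP n d k v Set.univ f)
    (hzero : ∀ T ≠ univ, ∀ x ∈ coneOf n d v T, f x = 0) :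
    ∃ a : MvPolynomial (Fin n) ℤ, a.IsHomogeneous (k - d) ∧
      ∀ x ∈ coneOf n d v univ, f x = aeval x a * ∏ i, Ψ i x := by
  obtain ⟨p, hp, hpf⟩ := hf univ trivial
  have hpf' : ∀ c, 0 ≤ c →
      aeval c (aeval (fun t => linearPoly (v · t)) p) = f (rayMap v c) := fun c hc => by
    rw [aeval_aeval_linearPoly_rayMap, hpf _ ((mem_coneOf_univ_iff v).2 ⟨c, hc, rfl⟩)]
  obtain ⟨r, hr, hpr⟩ := exists_eq_prod_X_mul_of_aeval_eq_zero
    (hp.aeval_linearPoly fun t i => v i t) fun c hc ⟨i, hi⟩ => by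
      rw [hpf' c hc]
      exact hzero _ (by simp [erase_eq_self]) _ (rayMap_mem_coneOf_erase v hc hi)
  refine ⟨aeval (fun i => linearPoly (ℓ i)) r, by simpa using hr.aeval_linearPoly ℓ,
    fun x hx => ?_⟩
  obtain ⟨c, hc, rfl⟩ := (mem_coneOf_univ_iff v).1 hx
  rw [← hpf' c hc, hpr, aeval_rayMap_aeval_linearPoly_dual hℓ]
  simp [apply_rayMap hΨ, mul_comm]

theorem aeval_eq_of_mul_prod_eq (hΨ : ∀ i j, Ψ i (rayR n d v j) = if i = j then 1 else 0)
    {a a' : MvPolynomial (Fin n) ℤ}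
    (h : ∀ x ∈ coneOf n d v univ, aeval x a * ∏ i, Ψ i x = aeval x a' * ∏ i, Ψ i x) :
    ∀ x ∈ coneOf n d v univ, aeval x a = (aeval x a' : ℝ) := by
  have hpoly : aeval (fun t => linearPoly (v · t)) a = aeval (fun t => linearPoly (v · t)) a' :=
    sub_eq_zero.1 <| eq_zero_of_aeval_pos fun c hc => by
      have hprod : ∏ i, Ψ i (rayMap v c) ≠ 0 := by
        simp [apply_rayMap hΨ, Finset.prod_ne_zero_iff, (hc _).ne']
      rw [map_sub, sub_eq_zero, aeval_aeval_linearPoly_rayMap, aeval_aeval_linearPoly_rayMap]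
      exact mul_right_cancel₀ hprod (h _ ((mem_coneOf_univ_iff v).2 ⟨c, fun i => (hc i).le, rfl⟩))
  intro x hx
  obtain ⟨c, -, rfl⟩ := (mem_coneOf_univ_iff v).1 hx
  rw [← aeval_aeval_linearPoly_rayMap, hpoly, aeval_aeval_linearPoly_rayMap]

end Cone

/-- Exactness of `0 → Ψ_σ·P^{k-d}(V_σ) → PP^k(F) → PP^k(F∖{σ}) → 0` for a unimodular fan
`F` with unique maximal cone `σ`: the restriction map is surjective, and a piecewise
polynomial vanishing on all proper faces of `σ` is `a·Ψ_σ` for a unique homogeneous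
integer polynomial `a` of degree `k - d`. -/
theorem stmt9 (n d k : ℕ) (v : Fin d → Fin n → ℤ)
    (hUni : ∃ (b : Module.Basis (Fin n) ℤ (Fin n → ℤ)) (g : Fin d → Fin n),
      Function.Injective g ∧ ∀ i, b (g i) = v i)
    (Ψ : Fin d → (Fin n → ℝ) →ₗ[ℝ] ℝ)
    (hΨval : ∀ i j : Fin d, Ψ i (rayR n d v j) = if i = j then 1 else 0) :
    -- surjectivity of the restriction to the boundary subfan
    (∀ g : (Fin n → ℝ) → ℝ,
      IsPP n d k v {T | T ≠ Finset.univ} g →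
      ∃ f : (Fin n → ℝ) → ℝ, IsPP n d k v Set.univ f ∧
        ∀ T : Finset (Fin d), T ≠ Finset.univ → ∀ x ∈ coneOf n d v T, f x = g x) ∧
    -- a piecewise polynomial vanishing on the proper faces is `a·Ψ_σ` …
    (∀ f : (Fin n → ℝ) → ℝ, IsPP n d k v Set.univ f →
      (∀ T : Finset (Fin d), T ≠ Finset.univ → ∀ x ∈ coneOf n d v T, f x = 0) →
      ∃ a : MvPolynomial (Fin n) ℤ, a.IsHomogeneous (k - d) ∧
        ∀ x ∈ coneOf n d v Finset.univ,
          f x = MvPolynomial.aeval x a * ∏ i : Fin d, Ψ i x) ∧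
    -- … for a unique such polynomial (unique as a function on the maximal cone)
    (∀ f : (Fin n → ℝ) → ℝ, ∀ a a' : MvPolynomial (Fin n) ℤ,
      a.IsHomogeneous (k - d) → a'.IsHomogeneous (k - d) →
      (∀ x ∈ coneOf n d v Finset.univ,
        f x = MvPolynomial.aeval x a * ∏ i : Fin d, Ψ i x) →
      (∀ x ∈ coneOf n d v Finset.univ,
        f x = MvPolynomial.aeval x a' * ∏ i : Fin d, Ψ i x) →
      ∀ x ∈ coneOf n d v Finset.univ,
        MvPolynomial.aeval x a = (MvPolynomial.aeval x a' : ℝ)) := by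
  obtain ⟨b, g, hg, hbg⟩ := hUni
  obtain ⟨ℓ, hℓ⟩ := exists_dual_of_basis v b g hg hbg
  exact ⟨fun _ => exists_isPP_extension_of_isPP_boundary hℓ,
    fun _ => exists_eq_mul_prod_of_isPP_of_eq_zero_on_boundary hℓ hΨval,
    fun _ _ _ _ _ h h' => aeval_eq_of_mul_prod_eq hΨval fun x hx => (h x hx).symm.trans (h' x hx)⟩
end

section
/- Let $M$ be a loopfree matroid on ground set $E=\{1,\ldots,n\}$ and let $F$ be a flat of $M$ of rank $i \ge 2$. Fix a flat $F_{i-2} \subsetneq F$ of rank $i-2$. If $\varphi$ is a real-valued function on flats such that for every such pair the relation $\sum_{G \text{ flat},\, F_{i-2}\subsetneq G \subsetneq F}\varphi(G) - \varphi(F) - (N-1)\varphi(F_{i-2}) = 0$ holds, where $N$ is the number of flats $G$ with $F_{i-2}\subsetneq G\subsetneq F$, and $\varphi(\emptyset)=0$, then $\varphi(F) = \sum_{a \in F}\varphi(\mathrm{cl}(\{a\}))$ for every flat $F$, provided every singleton $\{a\}$ is a flat (in which case $\varphi(F) = \sum_{a\in F}\varphi(\{a\})$). -/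
/-!
For `F' ⊂ F` flats of rank difference two, the flats strictly between them are the flats
`cl (F' ∪ {a})` for `a ∈ F \ F'`, and every element of `F \ F'` lies in exactly one of them.
Hence a function of the form `X ↦ ∑_{a ∈ X} ψ a` satisfies the relation
`∑_G φ G - φ F - (N - 1) φ F' = 0`, since `F'` is counted once in each of the `N` flats `G`.
The relation determines `φ F` from the values of `φ` on smaller flats, so by induction on `F`
the function `φ` is additive; the flats of rank at most one are `∅` and the singletons.
-/

open Set

theorem finsum_mem_sub_card_mul_eq_zero_of_existsUnique {α : Type*} {ψ : α → ℝ}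
    {F F' : Set α} {S : Finset (Set α)} (hF : F.Finite) (hF'F : F' ⊆ F)
    (hS : ∀ G ∈ S, F' ⊆ G ∧ G ⊆ F) (huniq : ∀ a ∈ F \ F', ∃! G, G ∈ S ∧ a ∈ G) :
    ∑ G ∈ S, ∑ᶠ a ∈ G, ψ a - ∑ᶠ a ∈ F, ψ a - ((S.card : ℝ) - 1) * ∑ᶠ a ∈ F', ψ a = 0 := by
  have hsplit : ∀ G ∈ S, ∑ᶠ a ∈ G, ψ a = ∑ᶠ a ∈ F', ψ a + ∑ᶠ a ∈ G \ F', ψ a := fun G hG =>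
    (finsum_mem_add_sdiff (hS G hG).1 (hF.subset (hS G hG).2)).symm
  have hcover : ⋃ G ∈ (S : Set (Set α)), G \ F' = F \ F' := by
    refine Subset.antisymm (iUnion₂_subset fun G hG => sdiff_subset_sdiff_left (hS G hG).2) ?_
    intro a ha
    obtain ⟨G, ⟨hG, haG⟩, -⟩ := huniq a ha
    exact mem_iUnion₂.2 ⟨G, hG, haG, ha.2⟩
  have hdisj : (S : Set (Set α)).PairwiseDisjoint (· \ F') := by
    intro G₁ h₁ G₂ h₂ hne
    refine disjoint_left.2 fun a ha₁ ha₂ => hne ?_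
    exact (huniq a ⟨(hS G₁ h₁).2 ha₁.1, ha₁.2⟩).unique ⟨h₁, ha₁.1⟩ ⟨h₂, ha₂.1⟩
  have hpieces : ∑ G ∈ S, ∑ᶠ a ∈ G \ F', ψ a = ∑ᶠ a ∈ F \ F', ψ a := by
    rw [← hcover, finsum_mem_biUnion hdisj S.finite_toSet
      fun G hG => hF.sdiff.subset (sdiff_subset_sdiff_left (hS G hG).2), finsum_mem_coe_finset]
  rw [Finset.sum_congr rfl hsplit, Finset.sum_add_distrib, Finset.sum_const, nsmul_eq_mul,
    hpieces, ← finsum_mem_add_sdiff hF'F hF]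
  ring

namespace Matroid

variable {α : Type*} {M : Matroid α} {F F' G I : Set α} {a : α}

theorem IsFlat.eq_of_subset_of_eRk_le [M.RankFinite] (hG : M.IsFlat G) (hGF : G ⊆ F)
    (hF : F ⊆ M.E) (hrk : M.eRk F ≤ M.eRk G) : G = F := by
  by_contra hne
  obtain ⟨e, heF, heG⟩ := exists_of_ssubset (hGF.ssubset_of_ne hne)
  have hins : M.eRk (insert e G) = M.eRk G + 1 :=
    eRk_insert_eq_add_one ⟨hF heF, by rwa [hG.closure]⟩
  have hle : M.eRk G + 1 ≤ M.eRk G :=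
    hins ▸ (M.eRk_mono (insert_subset heF hGF)).trans hrk
  exact (ENat.lt_add_one_iff (M.isRkFinite_set G).eRk_lt_top.ne).2 le_rfl |>.not_ge hle

theorem IsFlat.eRk_closure_insert (hF' : M.IsFlat F') (ha : a ∈ M.E \ F') :
    M.eRk (M.closure (insert a F')) = M.eRk F' + 1 := by
  rw [eRk_closure_eq, eRk_insert_eq_add_one (by rwa [hF'.closure])]

theorem IsFlat.existsUnique_isFlat_between [M.RankFinite] (hF' : M.IsFlat F')
    (hF : M.IsFlat F) (hF'F : F' ⊆ F) (hrk : M.eRk F = M.eRk F' + 2) (ha : a ∈ F \ F') :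
    ∃! G, (M.IsFlat G ∧ F' ⊂ G ∧ G ⊂ F) ∧ a ∈ G := by
  have haE : a ∈ M.E := hF.subset_ground ha.1
  have haG : a ∈ M.closure (insert a F') := M.mem_closure_of_mem' (mem_insert a F')
  have hF'G : F' ⊆ M.closure (insert a F') := M.subset_closure_of_subset' (subset_insert a F')
  have hrkG := hF'.eRk_closure_insert ⟨haE, ha.2⟩
  have hGF : M.closure (insert a F') ⊆ F := by
    simpa only [hF.closure] using M.closure_subset_closure (insert_subset ha.1 hF'F)
  have hGF_ne : M.closure (insert a F') ≠ F := by
    intro hGF_eq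
    rw [hGF_eq, hrk] at hrkG
    exact ((ENat.add_lt_add_iff_left (M.isRkFinite_set F').eRk_lt_top.ne).2 (by norm_num)).ne
      hrkG.symm
  refine ⟨M.closure (insert a F'), ⟨⟨isFlat_closure _, (ssubset_iff_of_subset hF'G).2
    ⟨a, haG, ha.2⟩, hGF.ssubset_of_ne hGF_ne⟩, haG⟩, ?_⟩
  rintro G ⟨⟨hG, hF'G', hGF'⟩, haG'⟩
  have hsub : M.closure (insert a F') ⊆ G := by
    simpa only [hG.closure] using M.closure_subset_closure (insert_subset haG' hF'G'.subset)
  refine ((isFlat_closure _).eq_of_subset_of_eRk_le hsub hG.subset_ground ?_).symm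
  rw [hrkG]
  refine Order.le_of_lt_add_one ?_
  rw [add_assoc, one_add_one_eq_two, ← hrk]
  by_contra hle
  exact hGF'.ne (hG.eq_of_subset_of_eRk_le hGF'.subset hF.subset_ground (not_lt.1 hle))

theorem IsBasis.eRk_eq_eRk_add [M.RankFinite] {X X' I' : Set α} {k : ℕ} (hI : M.IsBasis I X)
    (hI' : M.IsBasis I' X') (hcard : I.ncard = I'.ncard + k) : M.eRk X = M.eRk X' + k := by
  rw [← hI.encard_eq_eRk, ← hI'.encard_eq_eRk, ← hI.indep.finite.cast_ncard_eq,
    ← hI'.indep.finite.cast_ncard_eq, hcard, Nat.cast_add]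

theorem IsBasis.exists_closure_ssubset_ncard_add_two [M.RankFinite] (hI : M.IsBasis I F)
    (hF : M.IsFlat F) (hrk : 1 < M.eRk F) :
    ∃ I', M.IsBasis I' (M.closure I') ∧ M.closure I' ⊂ F ∧ I.ncard = I'.ncard + 2 := by
  have h2 : 2 ≤ I.ncard := by
    rw [← hI.encard_eq_eRk, ← hI.indep.finite.cast_ncard_eq] at hrk
    exact_mod_cast hrk
  obtain ⟨I', hI'I, hI'card⟩ := exists_subset_card_eq (s := I) (n := I.ncard - 2) (by omega)
  have hI'ssub : I' ⊂ I := hI'I.ssubset_of_ne (by rintro rfl; omega)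
  refine ⟨I', (hI.indep.subset hI'I).isBasis_closure, ?_, by omega⟩
  simpa only [hI.closure_eq_closure, hF.closure] using hI.indep.closure_ssubset_closure hI'ssub

theorem IsFlat.eq_finsum_of_sum_between_sub_eq_zero [M.RankFinite] {φ : Set α → ℝ}
    {ψ : α → ℝ} {S : Finset (Set α)} (hF : M.IsFlat F) (hF' : M.IsFlat F') (hFfin : F.Finite)
    (hF'F : F' ⊂ F) (hrk : M.eRk F = M.eRk F' + 2)
    (hS : ∀ G, G ∈ S ↔ M.IsFlat G ∧ F' ⊂ G ∧ G ⊂ F)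
    (hrel : ∑ G ∈ S, φ G - φ F - ((S.card : ℝ) - 1) * φ F' = 0)
    (hsmaller : ∀ G, M.IsFlat G → G ⊂ F → φ G = ∑ᶠ a ∈ G, ψ a) :
    φ F = ∑ᶠ a ∈ F, ψ a := by
  have hadd := finsum_mem_sub_card_mul_eq_zero_of_existsUnique (ψ := ψ) hFfin hF'F.subset
    (fun G hG => ⟨((hS G).1 hG).2.1.subset, ((hS G).1 hG).2.2.subset⟩)
    (fun a ha => by simpa only [hS] using hF'.existsUnique_isFlat_between hF hF'F.subset hrk ha)
  rw [Finset.sum_congr rfl fun G hG => hsmaller G ((hS G).1 hG).1 ((hS G).1 hG).2.2,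
    hsmaller F' hF' hF'F] at hrel
  linarith

end Matroid

open Matroid

theorem stmt15_general (n : ℕ) (M : Matroid (Fin n))
    (hloop : ∀ a : Fin n, M.Indep {a})
    (hsingle : ∀ a : Fin n, M.IsFlat {a})
    (φ : Set (Fin n) → ℝ) (hempty : φ ∅ = 0)
    (hrel : ∀ F' F : Set (Fin n), M.IsFlat F' → M.IsFlat F → F' ⊂ F →
      (∃ I I' : Set (Fin n), M.IsBasis I' F' ∧ M.IsBasis I F ∧ I.ncard = I'.ncard + 2) →
      (∑ G ∈ (Set.toFinite {G : Set (Fin n) | M.IsFlat G ∧ F' ⊂ G ∧ G ⊂ F}).toFinset, φ G)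
        - φ F -
        (((Set.toFinite {G : Set (Fin n) | M.IsFlat G ∧ F' ⊂ G ∧ G ⊂ F}).toFinset.card : ℝ)
          - 1) * φ F' = 0) :
    ∀ F : Set (Fin n), M.IsFlat F →
      φ F = ∑ a ∈ (Set.toFinite F).toFinset, φ (M.closure {a}) ∧
      φ F = ∑ a ∈ (Set.toFinite F).toFinset, φ {a} := by
  have hadditive : ∀ F, M.IsFlat F → φ F = ∑ᶠ a ∈ F, φ {a} := by
    intro F
    induction F using WellFoundedLT.induction with
    | _ F ih =>
    intro hF
    rcases le_or_gt (M.eRk F) 1 with hrk | hrk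
    · obtain rfl | ⟨a, haF⟩ := F.eq_empty_or_nonempty
      · rw [hempty, finsum_mem_empty]
      · rw [← (hsingle a).eq_of_subset_of_eRk_le (singleton_subset_iff.2 haF) hF.subset_ground
          (by rwa [(hloop a).eRk_eq_encard, encard_singleton]), finsum_mem_singleton]
    · obtain ⟨I, hI⟩ := M.exists_isBasis F hF.subset_ground
      obtain ⟨I', hI', hF'F, hcard⟩ := hI.exists_closure_ssubset_ncard_add_two hF hrk
      exact hF.eq_finsum_of_sum_between_sub_eq_zero (isFlat_closure I') (toFinite F) hF'F
        (hI.eRk_eq_eRk_add hI' hcard) (fun _ => Finite.mem_toFinset _)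
        (hrel _ F (isFlat_closure I') hF hF'F ⟨I, I', hI', hI, hcard⟩) (fun G hG hGF => ih G hGF hG)
  intro F hF
  have hsum := (hadditive F hF).trans (finsum_mem_eq_finite_toFinset_sum _ (toFinite F))
  exact ⟨hsum.trans (Finset.sum_congr rfl fun a _ => by rw [(hsingle a).closure]), hsum⟩

/-- The combinatorial core of the codimension-1 Poincaré duality for matroid varieties:
if a function `φ` on flats of a loopfree matroid (in which every singleton is a flat,
and with `φ(∅) = 0`) satisfies, for every pair of flats `F' ⊊ F` of rank difference 2,
`∑_{F'⊊G⊊F} φ(G) - φ(F) - (N-1)·φ(F') = 0` (`N` the number of intermediate flats `G`),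
then `φ(F) = ∑_{a∈F} φ(cl{a}) = ∑_{a∈F} φ({a})` for every flat `F`. -/
theorem stmt15 (n : ℕ) (M : Matroid (Fin n)) (hE : M.E = Set.univ)
    (hloop : ∀ a : Fin n, M.Indep {a})
    (hsingle : ∀ a : Fin n, M.IsFlat {a})
    (φ : Set (Fin n) → ℝ) (hempty : φ ∅ = 0)
    (hrel : ∀ F' F : Set (Fin n), M.IsFlat F' → M.IsFlat F → F' ⊂ F →
      (∃ I I' : Set (Fin n), M.IsBasis I' F' ∧ M.IsBasis I F ∧ I.ncard = I'.ncard + 2) →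
      (∑ G ∈ (Set.toFinite {G : Set (Fin n) | M.IsFlat G ∧ F' ⊂ G ∧ G ⊂ F}).toFinset, φ G)
        - φ F -
        (((Set.toFinite {G : Set (Fin n) | M.IsFlat G ∧ F' ⊂ G ∧ G ⊂ F}).toFinset.card : ℝ)
          - 1) * φ F' = 0) :
    ∀ F : Set (Fin n), M.IsFlat F →
      φ F = ∑ a ∈ (Set.toFinite F).toFinset, φ (M.closure {a}) ∧
      φ F = ∑ a ∈ (Set.toFinite F).toFinset, φ {a} :=
  stmt15_general n M hloop hsingle φ hempty hrel
end
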